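/- arXiv:math/0608724 — 4 statements merged into one kernel-verified Lean document; each statement's English description precedes it below -/
import Mathlib

section
/- Let H be a nonempty compact subset of K^n × (K \ {0}) and let 0 < r ≤ 1 be a constant. For 0 ≤ t < ∞ set X_t := {y ∈ K^n : |y − z| ≤ |x|^r · t for every (z,x) ∈ H}. Then c := inf{t ≥ 0 : X_t ≠ ∅} is finite, X_c = ⋂_{t>c} X_t and X_c is nonempty; moreover, for every q ∈ X_c there exists (z,x) ∈ H with |q − z| = |x|^r · c. -/
open MeasureTheory Metric Set Filter Topology

/-- Lemma 7. Let `H` be a nonempty compact subset of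
`K^n × (K \ {0})` and `0 < r ≤ 1`.  For `0 ≤ t < ∞` set
`X t = {y ∈ K^n : ‖y - z‖ ≤ ‖x‖^r * t for every (z,x) ∈ H}`.  Then
`c = inf {t ≥ 0 : X t ≠ ∅}` is attained on a nonempty set (so `c` is finite),
`X c = ⋂_{t > c} X t`, `X c ≠ ∅`, and for every `q ∈ X c` there exists
`(z,x) ∈ H` with `‖q - z‖ = ‖x‖^r * c`. -/
theorem stmt0 {K : Type*} [NontriviallyNormedField K] [IsUltrametricDist K]
    [LocallyCompactSpace K] {n : ℕ}
    (H : Set ((Fin n → K) × K)) (hHcomp : IsCompact H) (hHne : H.Nonempty)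
    (hH0 : ∀ p ∈ H, p.2 ≠ 0)
    (r : ℝ) (hr0 : 0 < r) (hr1 : r ≤ 1)
    (X : ℝ → Set (Fin n → K))
    (hX : ∀ t : ℝ, X t = {y : Fin n → K | ∀ p ∈ H, ‖y - p.1‖ ≤ ‖p.2‖ ^ r * t})
    (c : ℝ) (hc : c = sInf {t : ℝ | 0 ≤ t ∧ (X t).Nonempty}) :
    {t : ℝ | 0 ≤ t ∧ (X t).Nonempty}.Nonempty ∧
    X c = ⋂ t ∈ Set.Ioi c, X t ∧
    (X c).Nonempty ∧
    ∀ q ∈ X c, ∃ p ∈ H, ‖q - p.1‖ = ‖p.2‖ ^ r * c := by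
  classical
  have hK : ProperSpace K :=
    ProperSpace.of_nontriviallyNormedField_of_weaklyLocallyCompactSpace K
  obtain ⟨p₀, hp₀⟩ := hHne
  set S : Set ℝ := {t : ℝ | 0 ≤ t ∧ (X t).Nonempty} with hS
  -- positivity of weights
  have hwpos : ∀ p ∈ H, (0:ℝ) < ‖p.2‖ ^ r := fun p hp =>
    Real.rpow_pos_of_pos (norm_pos_iff.mpr (hH0 p hp)) r
  -- continuity of the weight
  have hcontw : ContinuousOn (fun p : (Fin n → K) × K => ‖p.2‖ ^ r) H := by
    apply ContinuousOn.rpow_const (Continuous.continuousOn (by fun_prop))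
    intro p hp
    exact Or.inl (norm_ne_zero_iff.mpr (hH0 p hp))
  -- minimum weight
  obtain ⟨pm, hpmH, hpm⟩ := hHcomp.exists_isMinOn ⟨p₀, hp₀⟩ hcontw
  set m : ℝ := ‖pm.2‖ ^ r with hm_def
  have hm : 0 < m := hwpos pm hpmH
  have hwm : ∀ p ∈ H, m ≤ ‖p.2‖ ^ r := fun p hp => hpm hp
  -- monotonicity of X
  have hXmono : ∀ s t : ℝ, s ≤ t → X s ⊆ X t := by
    intro s t hst y hy
    rw [hX] at hy ⊢
    intro p hp
    exact (hy p hp).trans (mul_le_mul_of_nonneg_left hst (hwpos p hp).le)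
  -- S is nonempty
  obtain ⟨pM, hpMH, hpM⟩ := hHcomp.exists_isMaxOn ⟨p₀, hp₀⟩
    (Continuous.continuousOn (by fun_prop :
      Continuous fun p : (Fin n → K) × K => ‖p₀.1 - p.1‖))
  set M : ℝ := ‖p₀.1 - pM.1‖ with hM_def
  have hM0 : 0 ≤ M := norm_nonneg _
  have hSne : S.Nonempty := by
    refine ⟨M / m, div_nonneg hM0 hm.le, p₀.1, ?_⟩
    rw [hX]
    intro p hp
    have h1 : ‖p₀.1 - p.1‖ ≤ M := hpM hp
    have h2 : M = m * (M / m) := by field_simp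
    calc ‖p₀.1 - p.1‖ ≤ M := h1
      _ = m * (M / m) := h2
      _ ≤ ‖p.2‖ ^ r * (M / m) :=
        mul_le_mul_of_nonneg_right (hwm p hp) (div_nonneg hM0 hm.le)
  have hSbdd : BddBelow S := ⟨0, fun t ht => ht.1⟩
  have hc0 : 0 ≤ c := hc ▸ le_csInf hSne fun t ht => ht.1
  have hcle : ∀ t ∈ S, c ≤ t := fun t ht => hc ▸ csInf_le hSbdd ht
  -- each X t for t > c is nonempty
  have hXt_ne : ∀ t, c < t → (X t).Nonempty := by
    intro t ht
    obtain ⟨s, hsS, hst⟩ := exists_lt_of_csInf_lt hSne (hc ▸ ht)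
    exact hsS.2.mono (hXmono s t hst.le) |>.imp fun y hy => hy
  -- closedness and compactness
  have hXclosed : ∀ t, IsClosed (X t) := by
    intro t
    have : X t = ⋂ p ∈ H, Metric.closedBall p.1 (‖p.2‖ ^ r * t) := by
      ext y
      simp [hX, Metric.mem_closedBall, dist_eq_norm]
    rw [this]
    exact isClosed_biInter fun p _ => Metric.isClosed_closedBall
  have hXcompact : ∀ t, IsCompact (X t) := by
    intro t
    refine (isCompact_closedBall p₀.1 (‖p₀.2‖ ^ r * t)).of_isClosed_subset
      (hXclosed t) ?_
    intro y hy
    rw [hX] at hy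
    simpa [Metric.mem_closedBall, dist_eq_norm] using hy p₀ hp₀
  -- limit: membership in all X t for t > c gives membership in X c
  have hlim : ∀ y, (∀ t, c < t → y ∈ X t) → y ∈ X c := by
    intro y hy
    rw [hX]
    intro p hp
    refine le_of_forall_pos_le_add ?_
    intro ε hε
    have hw := hwpos p hp
    have ht : c < c + ε / ‖p.2‖ ^ r := by
      have : 0 < ε / ‖p.2‖ ^ r := div_pos hε hw
      linarith
    have := hy _ ht
    rw [hX] at this
    have h2 := this p hp
    calc ‖y - p.1‖ ≤ ‖p.2‖ ^ r * (c + ε / ‖p.2‖ ^ r) := h2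
      _ = ‖p.2‖ ^ r * c + ε := by field_simp
  -- Part 2 : X c = ⋂_{t > c} X t
  have hpart2 : X c = ⋂ t ∈ Set.Ioi c, X t := by
    apply Subset.antisymm
    · intro y hy
      exact Set.mem_biInter fun t ht => hXmono c t (le_of_lt ht) hy
    · intro y hy
      exact hlim y fun t ht => Set.mem_iInter₂.mp hy t ht
  -- Part 3 : X c nonempty
  have hpart3 : (X c).Nonempty := by
    set V : ℕ → Set (Fin n → K) := fun k => X (c + 1 / (k + 1)) with hV
    have hVsub : ∀ k, V (k + 1) ⊆ V k := by
      intro k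
      apply hXmono
      have : (1:ℝ) / (k + 1 + 1) ≤ 1 / (k + 1) := by
        apply one_div_le_one_div_of_le <;> push_cast <;> linarith
      push_cast
      linarith
    have hVne : ∀ k, (V k).Nonempty := by
      intro k
      apply hXt_ne
      have : (0:ℝ) < 1 / ((k:ℝ) + 1) := by positivity
      linarith
    have hVcl : ∀ k, IsClosed (V k) := fun k => hXclosed _
    obtain ⟨y, hy⟩ := IsCompact.nonempty_iInter_of_sequence_nonempty_isCompact_isClosed
      V hVsub hVne (hXcompact _) hVcl
    refine ⟨y, hlim y ?_⟩
    intro t ht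
    obtain ⟨k, hk⟩ := exists_nat_one_div_lt (sub_pos.mpr ht)
    have hyk : y ∈ V k := Set.mem_iInter.mp hy k
    exact hXmono _ t (by push_cast at hk ⊢; linarith) hyk
  refine ⟨hSne, hpart2, hpart3, ?_⟩
  -- Part 4
  intro q hq
  by_contra hcon
  push_neg at hcon
  rw [hX] at hq
  have hqc : ∀ p ∈ H, ‖q - p.1‖ < ‖p.2‖ ^ r * c := fun p hp =>
    lt_of_le_of_ne (hq p hp) (hcon p hp)
  set g : (Fin n → K) × K → ℝ := fun p => ‖q - p.1‖ / ‖p.2‖ ^ r with hg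
  have hgcont : ContinuousOn g H := by
    refine ContinuousOn.div (Continuous.continuousOn (by fun_prop)) hcontw ?_
    exact fun p hp => (hwpos p hp).ne'
  obtain ⟨pg, hpgH, hpg⟩ := hHcomp.exists_isMaxOn ⟨p₀, hp₀⟩ hgcont
  set t : ℝ := g pg with ht_def
  have ht0 : 0 ≤ t := div_nonneg (norm_nonneg _) (hwpos pg hpgH).le
  have htS : t ∈ S := by
    refine ⟨ht0, q, ?_⟩
    rw [hX]
    intro p hp
    have h1 : g p ≤ t := hpg hp
    have h2 : ‖q - p.1‖ = g p * ‖p.2‖ ^ r :=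
      (div_mul_cancel₀ _ (hwpos p hp).ne').symm
    rw [h2, mul_comm (‖p.2‖ ^ r) t]
    exact mul_le_mul_of_nonneg_right h1 (hwpos p hp).le
  have h3 : c ≤ t := hcle t htS
  have h4 : t < c := by
    rw [ht_def, hg]
    rw [div_lt_iff₀ (hwpos pg hpgH)]
    calc ‖q - pg.1‖ < ‖pg.2‖ ^ r * c := hqc pg hpgH
      _ = c * ‖pg.2‖ ^ r := mul_comm _ _
  linarith
end

section
/- Let S ⊂ K^m and let f : S → K^n satisfy |f(x) − f(y)| ≤ C|x − y|^r for all x, y ∈ S, where 0 < C < ∞ and 0 < r ≤ 1. Then f has an extension g : K^m → K^n with g|_S = f and |g(x) − g(y)| ≤ C|x − y|^r for all x, y ∈ K^m (the same Hölder constant C and the same exponent r). -/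
/-!
For `r > 0` the gauge `C * |x - y| ^ r` on `K^m` again satisfies the ultrametric inequality, so it
suffices to extend maps into the proper ultrametric space `K^n` dominated by an ultrametric gauge.
By Zorn's lemma this reduces to adding one point `x`: the closed balls around the values `f t` of
radius `d(x, t)` are pairwise nested (in an ultrametric space two closed balls are nested as soon as
they meet), so by compactness they have a common point, which is an admissible value at `x`.
-/

open Metric Set

section

variable {X Y : Type*}

structure IsUltrametricGauge (d : X → X → ℝ) : Prop where
  self_eq_zero : ∀ x, d x x = 0
  symm : ∀ x y, d x y = d y x
  le_max : ∀ x y z, d x z ≤ max (d x y) (d y z)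

namespace IsUltrametricGauge

variable {d : X → X → ℝ}

theorem nonneg (hd : IsUltrametricGauge d) (x y : X) : 0 ≤ d x y := by
  simpa [hd.self_eq_zero, hd.symm y x] using hd.le_max x y x

theorem comp_dist [PseudoMetricSpace X] [IsUltrametricDist X] {φ : ℝ → ℝ}
    (hφ : MonotoneOn φ (Ici 0)) (hφ0 : φ 0 = 0) :
    IsUltrametricGauge fun x y : X => φ (dist x y) where
  self_eq_zero x := by simp [hφ0]
  symm x y := by rw [dist_comm]
  le_max x y z :=
    (hφ dist_nonneg (le_max_of_le_left dist_nonneg) (dist_triangle_max x y z)).trans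
      (hφ.map_max dist_nonneg dist_nonneg).le

end IsUltrametricGauge

/-- Partial maps are encoded by their graphs, so that Zorn's lemma applies to subsets of `X × Y`
ordered by inclusion. -/
def GaugeDominated [Dist Y] (d : X → X → ℝ) (R : Set (X × Y)) : Prop :=
  ∀ p ∈ R, ∀ q ∈ R, dist p.2 q.2 ≤ d p.1 q.1

namespace GaugeDominated

variable {d : X → X → ℝ} {R : Set (X × Y)}

theorem exists_dist_le [PseudoMetricSpace Y] [IsUltrametricDist Y] [ProperSpace Y] [Nonempty Y]
    (hd : IsUltrametricGauge d) (hR : GaugeDominated d R) (x : X) :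
    ∃ v : Y, ∀ p ∈ R, dist v p.2 ≤ d x p.1 := by
  rcases R.eq_empty_or_nonempty with rfl | hne
  · exact ⟨Classical.arbitrary Y, by simp⟩
  have : Nonempty R := hne.to_subtype
  let B : R → Set Y := fun p => closedBall p.1.2 (d x p.1.1)
  have hmono : ∀ p q : R, d x p.1.1 ≤ d x q.1.1 → B p ⊆ B q := fun p q hpq => by
    have hpq' : p.1.2 ∈ closedBall q.1.2 (d x q.1.1) := by
      rw [mem_closedBall]
      calc dist p.1.2 q.1.2 ≤ d p.1.1 q.1.1 := hR _ p.2 _ q.2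
        _ ≤ max (d x p.1.1) (d x q.1.1) := hd.symm x p.1.1 ▸ hd.le_max _ x _
        _ = d x q.1.1 := max_eq_right hpq
    exact (closedBall_subset_closedBall hpq).trans
      (IsUltrametricDist.closedBall_eq_of_mem hpq').ge
  have hdir : Directed (· ⊇ ·) B := fun p q =>
    (le_total (d x p.1.1) (d x q.1.1)).elim (fun h => ⟨p, subset_rfl, hmono p q h⟩)
      (fun h => ⟨q, hmono q p h, subset_rfl⟩)
  obtain ⟨v, hv⟩ := IsCompact.nonempty_iInter_of_directed_nonempty_isCompact_isClosed B hdir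
    (fun p => ⟨p.1.2, mem_closedBall_self (hd.nonneg _ _)⟩) (fun _ => isCompact_closedBall _ _)
    (fun _ => isClosed_closedBall)
  exact ⟨v, fun p hp => mem_closedBall.1 (mem_iInter.1 hv ⟨p, hp⟩)⟩

theorem insert [PseudoMetricSpace Y] (hd : IsUltrametricGauge d) (hR : GaugeDominated d R)
    {x : X} {v : Y} (hv : ∀ p ∈ R, dist v p.2 ≤ d x p.1) : GaugeDominated d (insert (x, v) R) := by
  rintro p (rfl | hp) q (rfl | hq)
  · simp [hd.self_eq_zero]
  · exact hv q hq
  · rw [dist_comm, hd.symm]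
    exact hv p hp
  · exact hR p hp q hq

theorem sUnion [Dist Y] {c : Set (Set (X × Y))} (hc : IsChain (· ⊆ ·) c)
    (h : ∀ R ∈ c, GaugeDominated d R) : GaugeDominated d (⋃₀ c) := by
  rintro p ⟨A, hA, hp⟩ q ⟨B, hB, hq⟩
  rcases hc.total hA hB with hAB | hBA
  · exact h B hB p (hAB hp) q hq
  · exact h A hA p hp q (hBA hq)

end GaugeDominated

theorem exists_extension_of_dist_le_gauge [MetricSpace Y] [IsUltrametricDist Y] [ProperSpace Y]
    [Nonempty Y] {d : X → X → ℝ} (hd : IsUltrametricGauge d) {s : Set X} {f : X → Y}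
    (hf : ∀ x ∈ s, ∀ y ∈ s, dist (f x) (f y) ≤ d x y) :
    ∃ g : X → Y, EqOn g f s ∧ ∀ x y, dist (g x) (g y) ≤ d x y := by
  obtain ⟨R, hfR, hRmax⟩ := zorn_subset_nonempty {R | GaugeDominated d R}
    (fun c hcd hc _ => ⟨⋃₀ c, GaugeDominated.sUnion hc hcd, fun _ => subset_sUnion_of_mem⟩)
    ((fun x => (x, f x)) '' s) (by rintro _ ⟨x, hx, rfl⟩ _ ⟨y, hy, rfl⟩; exact hf x hx y hy)
  have hR : GaugeDominated d R := hRmax.prop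
  choose g hg using hR.exists_dist_le hd
  have hgR : ∀ x, (x, g x) ∈ R := fun x => hRmax.mem_of_prop_insert (hR.insert hd (hg x))
  refine ⟨g, fun x hx => ?_, fun x y => hR _ (hgR x) _ (hgR y)⟩
  have hgf := hR _ (hgR x) _ (hfR ⟨x, hx, rfl⟩)
  rw [hd.self_eq_zero] at hgf
  exact dist_le_zero.1 hgf

end

theorem stmt1_general {K : Type*} [NontriviallyNormedField K] [IsUltrametricDist K]
    [LocallyCompactSpace K] {m n : ℕ}
    (S : Set (Fin m → K)) (f : (Fin m → K) → (Fin n → K))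
    (C r : ℝ) (hC : 0 < C) (hr0 : 0 < r)
    (hf : ∀ x ∈ S, ∀ y ∈ S, ‖f x - f y‖ ≤ C * ‖x - y‖ ^ r) :
    ∃ g : (Fin m → K) → (Fin n → K),
      (∀ x ∈ S, g x = f x) ∧
      ∀ x y : Fin m → K, ‖g x - g y‖ ≤ C * ‖x - y‖ ^ r := by
  have : ProperSpace K := ProperSpace.of_locallyCompactSpace K
  have hd : IsUltrametricGauge fun x y : Fin m → K => C * dist x y ^ r :=
    IsUltrametricGauge.comp_dist
      (fun a ha _ _ hab => mul_le_mul_of_nonneg_left (Real.rpow_le_rpow ha hab hr0.le) hC.le)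
      (by simp [Real.zero_rpow hr0.ne'])
  obtain ⟨g, hgf, hg⟩ := exists_extension_of_dist_le_gauge hd (s := S) (f := f)
    (by simpa only [dist_eq_norm] using hf)
  exact ⟨g, hgf, by simpa only [dist_eq_norm] using hg⟩

/-- Theorem 8, non-archimedean Kirszbraun-type extension.
If `S ⊆ K^m` and `f : S → K^n` is Hölder with constants `C` and `r`
(`0 < C < ∞`, `0 < r ≤ 1`), then `f` extends to a map `g : K^m → K^n` which is
Hölder on all of `K^m` with the same constants `C` and `r`. -/
theorem stmt1 {K : Type*} [NontriviallyNormedField K] [IsUltrametricDist K]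
    [LocallyCompactSpace K] {m n : ℕ}
    (S : Set (Fin m → K)) (f : (Fin m → K) → (Fin n → K))
    (C r : ℝ) (hC : 0 < C) (hr0 : 0 < r) (hr1 : r ≤ 1)
    (hf : ∀ x ∈ S, ∀ y ∈ S, ‖f x - f y‖ ≤ C * ‖x - y‖ ^ r) :
    ∃ g : (Fin m → K) → (Fin n → K),
      (∀ x ∈ S, g x = f x) ∧
      ∀ x y : Fin m → K, ‖g x - g y‖ ≤ C * ‖x - y‖ ^ r :=
  stmt1_general S f C r hC hr0 hf
end

section
/- If φ : K^m × K^k → ℝ is μ^m ⊗ μ^k measurable, then the functions x ↦ ap limsup_{z→0} φ(x,z) and x ↦ ap liminf_{z→0} φ(x,z) are μ^m measurable, where ap limsup_{z→0} φ(x,z) := inf{c ∈ [−∞,∞] : the set {z ∈ K^k : φ(x,z) > c} has μ^k density 0 at 0} and ap liminf_{z→0} φ(x,z) := sup{c ∈ [−∞,∞] : the set {z ∈ K^k : φ(x,z) < c} has μ^k density 0 at 0}. -/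
open MeasureTheory Metric Set Filter Topology Pointwise

/-- A set `S` has `ν` density `0` (in dimension `d`) at a point `z`, where the
radii run through the value group `Γ_K = {‖x‖ : x ∈ K, x ≠ 0}`:
`lim_{R → 0, R ∈ Γ_K} ν (S ∩ B(z,R)) / R^d = 0`. -/
def densityZeroAt (K : Type*) [NontriviallyNormedField K] {E : Type*}
    [SeminormedAddCommGroup E] [MeasurableSpace E] (ν : Measure E) (d : ℕ)
    (S : Set E) (z : E) : Prop :=
  Filter.Tendsto (fun R : ℝ => ν (S ∩ Metric.closedBall z R) / ENNReal.ofReal (R ^ d))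
    (𝓝[{R : ℝ | ∃ x : K, x ≠ 0 ∧ ‖x‖ = R}] 0) (𝓝 0)

/-!
For a rational `q`, the set `{z | φ (x, z) > q}` is the slice at `x` of a null measurable subset
of the product, so by Tonelli each ratio `ν ({z | φ (x, z) > q} ∩ B(0, R)) / R ^ k` is a null
measurable function of `x`. The value group of a locally compact ultrametric field is countable,
so having density zero at `0` is a countable combination of conditions on these ratios. Finally
`ap limsup < a` holds iff some rational `q < a` has a density-zero superlevel set, a countable
union; the `ap liminf` is symmetric.
-/

/-- In an ultrametric space the spheres of positive radius about a point are open and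
pairwise disjoint, so separability leaves only countably many of them nonempty. -/
lemma IsUltrametricDist.countable_range_dist {X : Type*} [PseudoMetricSpace X]
    [IsUltrametricDist X] [TopologicalSpace.SeparableSpace X] (x : X) :
    (range fun y => dist y x).Countable := by
  have hspheres : {r : ℝ | r ≠ 0 ∧ (sphere x r).Nonempty}.Countable := by
    refine PairwiseDisjoint.countable_of_isOpen (s := sphere x) ?_
      (fun r hr => IsUltrametricDist.isOpen_sphere x hr.1) (fun r hr => hr.2)
    intro r _ s _ hrs
    exact disjoint_left.2 fun y hyr hys => hrs (hyr.symm.trans hys)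
  refine (hspheres.insert 0).mono ?_
  rintro _ ⟨y, rfl⟩
  by_cases hy : dist y x = 0
  · exact .inl hy
  · exact .inr ⟨hy, y, rfl⟩

lemma MeasureTheory.NullMeasurableSet.nullMeasurable_measure_prodMk_left
    {α β : Type*} [MeasurableSpace α] [MeasurableSpace β]
    {μ : Measure α} {ν : Measure β} [SFinite ν] {s : Set (α × β)}
    (hs : NullMeasurableSet s (μ.prod ν)) :
    NullMeasurable (fun x => ν (Prod.mk x ⁻¹' s)) μ := by
  obtain ⟨t, -, ht, hts⟩ := hs.exists_measurable_superset_ae_eq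
  refine (measurable_measure_prodMk_left (ν := ν) ht).nullMeasurable.congr ?_
  filter_upwards [Measure.ae_ae_of_ae_prod hts] with x hx using measure_congr hx

lemma densityZeroAt.mono {K : Type*} [NontriviallyNormedField K] {E : Type*}
    [SeminormedAddCommGroup E] [MeasurableSpace E] {ν : Measure E} {d : ℕ}
    {S T : Set E} {z : E} (hT : densityZeroAt K ν d T z) (hST : S ⊆ T) :
    densityZeroAt K ν d S z :=
  tendsto_of_tendsto_of_tendsto_of_le_of_le tendsto_const_nhds hT (fun _ => zero_le)
    fun _ => ENNReal.div_le_div_right (measure_mono (inter_subset_inter_left _ hST)) _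

lemma nullMeasurableSet_setOf_densityZeroAt_prodMk (K : Type*) [NontriviallyNormedField K]
    {α β : Type*} [MeasurableSpace α] [SeminormedAddCommGroup β] [MeasurableSpace β]
    [OpensMeasurableSpace β] {μ : Measure α} {ν : Measure β} [SFinite ν]
    (hK : {R : ℝ | ∃ x : K, x ≠ 0 ∧ ‖x‖ = R}.Countable) (d : ℕ) (z : β)
    {s : Set (α × β)} (hs : NullMeasurableSet s (μ.prod ν)) :
    NullMeasurableSet {x | densityZeroAt K ν d (Prod.mk x ⁻¹' s) z} μ := by
  have : Countable {R : ℝ | ∃ x : K, x ≠ 0 ∧ ‖x‖ = R} := hK.to_subtype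
  have hnhds : 𝓝[{R : ℝ | ∃ x : K, x ≠ 0 ∧ ‖x‖ = R}] (0 : ℝ) =
      map (↑) (comap ((↑) : {R : ℝ | ∃ x : K, x ≠ 0 ∧ ‖x‖ = R} → ℝ) (𝓝 0)) := by
    rw [map_comap, Subtype.range_coe]
    rfl
  simp only [densityZeroAt, hnhds, tendsto_map'_iff]
  refine measurableSet_tendsto (β := NullMeasurableSpace α μ) _ fun R => ?_
  exact Measurable.div_const (hs.inter (measurable_snd measurableSet_closedBall).nullMeasurableSet
    ).nullMeasurable_measure_prodMk_left _

lemma measurable_sInf_setOf_of_monotone {α : Type*} [MeasurableSpace α]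
    {P : EReal → α → Prop} (hP : ∀ x, Monotone (P · x))
    (hq : ∀ q : ℚ, MeasurableSet {x | P (q : ℝ) x}) :
    Measurable fun x => sInf {c | P c x} := by
  refine measurable_of_Iio fun a => ?_
  have hpre : (fun x => sInf {c | P c x}) ⁻¹' Iio a =
      ⋃ (q : ℚ) (_ : ((q : ℝ) : EReal) < a), {x | P (q : ℝ) x} := by
    ext x
    simp only [mem_preimage, mem_Iio, mem_iUnion, sInf_lt_iff]
    constructor
    · rintro ⟨c, hc, hca⟩
      obtain ⟨q, hcq, hqa⟩ := EReal.exists_rat_btwn_of_lt hca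
      exact ⟨q, hqa, hP x hcq.le hc⟩
    · rintro ⟨q, hqa, hq⟩
      exact ⟨_, hq, hqa⟩
  rw [hpre]
  exact .iUnion fun q => .iUnion fun _ => hq q

lemma measurable_sSup_setOf_of_antitone {α : Type*} [MeasurableSpace α]
    {P : EReal → α → Prop} (hP : ∀ x, Antitone (P · x))
    (hq : ∀ q : ℚ, MeasurableSet {x | P (q : ℝ) x}) :
    Measurable fun x => sSup {c | P c x} := by
  refine measurable_of_Ioi fun a => ?_
  have hpre : (fun x => sSup {c | P c x}) ⁻¹' Ioi a =
      ⋃ (q : ℚ) (_ : a < ((q : ℝ) : EReal)), {x | P (q : ℝ) x} := by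
    ext x
    simp only [mem_preimage, mem_Ioi, mem_iUnion, lt_sSup_iff]
    constructor
    · rintro ⟨c, hc, hac⟩
      obtain ⟨q, haq, hqc⟩ := EReal.exists_rat_btwn_of_lt hac
      exact ⟨q, haq, hP x hqc.le hc⟩
    · rintro ⟨q, haq, hq⟩
      exact ⟨_, hq, haq⟩
  rw [hpre]
  exact .iUnion fun q => .iUnion fun _ => hq q

theorem stmt4_general {K : Type*} [NontriviallyNormedField K] [IsUltrametricDist K]
    [LocallyCompactSpace K] [MeasurableSpace K] [BorelSpace K]
    (μ : Measure K) [μ.IsAddHaarMeasure]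
    {m k : ℕ}
    (φ : (Fin m → K) × (Fin k → K) → ℝ)
    (hφ : NullMeasurable φ
      ((Measure.pi fun _ : Fin m => μ).prod (Measure.pi fun _ : Fin k => μ))) :
    NullMeasurable
      (fun x : Fin m → K =>
        sInf {c : EReal | densityZeroAt K (Measure.pi fun _ : Fin k => μ) k
          {z : Fin k → K | c < (φ (x, z) : EReal)} 0})
      (Measure.pi fun _ : Fin m => μ) ∧
    NullMeasurable
      (fun x : Fin m → K =>
        sSup {c : EReal | densityZeroAt K (Measure.pi fun _ : Fin k => μ) k
          {z : Fin k → K | (φ (x, z) : EReal) < c} 0})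
      (Measure.pi fun _ : Fin m => μ) := by
  have : ProperSpace K := .of_locallyCompactSpace K
  have hΓ : {R : ℝ | ∃ x : K, x ≠ 0 ∧ ‖x‖ = R}.Countable :=
    (IsUltrametricDist.countable_range_dist (0 : K)).mono <| by
      rintro _ ⟨x, -, rfl⟩
      exact ⟨x, dist_zero_right x⟩
  have hlevel (t : Set ℝ) (ht : MeasurableSet t) :=
    nullMeasurableSet_setOf_densityZeroAt_prodMk K hΓ k 0 (hφ ht)
  constructor
  -- `NullMeasurable f μ` is `Measurable f` for the σ-algebra of `NullMeasurableSpace _ μ`.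
  · refine measurable_sInf_setOf_of_monotone
      (fun x c c' hcc' h => h.mono fun z hz => hcc'.trans_lt hz) fun q => ?_
    change NullMeasurableSet (α := Fin m → K) _ _
    simp only [EReal.coe_lt_coe_iff]
    exact hlevel (Ioi q) measurableSet_Ioi
  · refine measurable_sSup_setOf_of_antitone
      (fun x c c' hcc' h => h.mono fun z hz => hz.trans_le hcc') fun q => ?_
    change NullMeasurableSet (α := Fin m → K) _ _
    simp only [EReal.coe_lt_coe_iff]
    exact hlevel (Iio q) measurableSet_Iio

/-- Lemma 11. If `φ : K^m × K^k → ℝ` is `μ^m ⊗ μ^k`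
measurable, then the approximate `limsup` and `liminf` of `φ(x, ·)` at `0`,
namely `x ↦ inf {c : {z : φ(x,z) > c} has μ^k density 0 at 0}` and
`x ↦ sup {c : {z : φ(x,z) < c} has μ^k density 0 at 0}` (taken in `[-∞,∞]`),
are `μ^m` measurable functions of `x`. -/
theorem stmt4 {K : Type*} [NontriviallyNormedField K] [IsUltrametricDist K]
    [LocallyCompactSpace K] [MeasurableSpace K] [BorelSpace K]
    (μ : Measure K) [μ.IsAddHaarMeasure]
    (hμ1 : μ (closedBall (0 : K) 1) = 1)
    (hμs : ∀ (a : K) (A : Set K), μ (a • A) = (‖a‖₊ : ENNReal) * μ A)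
    {m k : ℕ}
    (φ : (Fin m → K) × (Fin k → K) → ℝ)
    (hφ : NullMeasurable φ
      ((Measure.pi fun _ : Fin m => μ).prod (Measure.pi fun _ : Fin k => μ))) :
    NullMeasurable
      (fun x : Fin m → K =>
        sInf {c : EReal | densityZeroAt K (Measure.pi fun _ : Fin k => μ) k
          {z : Fin k → K | c < (φ (x, z) : EReal)} 0})
      (Measure.pi fun _ : Fin m => μ) ∧
    NullMeasurable
      (fun x : Fin m → K =>
        sSup {c : EReal | densityZeroAt K (Measure.pi fun _ : Fin k => μ) k
          {z : Fin k → K | (φ (x, z) : EReal) < c} 0})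
      (Measure.pi fun _ : Fin m => μ) :=
  stmt4_general μ φ hφ
end

section
/- Let S ⊂ A ⊂ K^m, let f : A → K^n, and let 0 < R < ∞ and 0 < C < ∞ be such that for every z ∈ S one has B(K^m,z,R) ⊂ A and |f(x) − f(z)| ≤ C|x − z| for each x ∈ B(K^m,z,R). Suppose y ∈ S, the complement K^m \ S has μ^m density 0 at every point z of some neighborhood U_y of y, and f is approximately differentiable at y with approximate derivative L. Then f is differentiable at y with derivative L: lim_{A ∋ x → y} |f(x) − f(y) − L(x − y)|/|x − y| = 0. -/
open MeasureTheory Metric Set Filter Topology Pointwise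

/-!
Fix a small scalar `c ≠ 0` and `η > 0`. Both `Sᶜ` and the set where the first-order estimate at
`y` fails with constant `η` have density `0` at `y`, while for `x` near `y` the ball
`B(x, ‖c‖ ‖x - y‖)` has measure a fixed fraction of that of a ball about `y` of radius comparable
to `‖x - y‖` containing it. So this ball is not covered by the two sets: it contains a point
`z ∈ S` at which the estimate holds, and the Lipschitz bound of `f` at `z` carries the estimate
over to `x` at the cost of `(C + ‖L‖) ‖c‖ ‖x - y‖`.
-/

lemma densityZeroAt.union {K : Type*} [NontriviallyNormedField K] {E : Type*}
    [SeminormedAddCommGroup E] [MeasurableSpace E] {ν : Measure E} {d : ℕ} {T₁ T₂ : Set E}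
    {z : E} (h₁ : densityZeroAt K ν d T₁ z) (h₂ : densityZeroAt K ν d T₂ z) :
    densityZeroAt K ν d (T₁ ∪ T₂) z := by
  refine tendsto_of_tendsto_of_tendsto_of_le_of_le tendsto_const_nhds
    (by simpa using h₁.add h₂) (fun _ => zero_le) fun R => ?_
  rw [ENNReal.div_add_div_same, union_inter_distrib_right]
  exact ENNReal.div_le_div_right (measure_union_le _ _) _

lemma Pi.exists_norm_apply_eq_norm {ι G : Type*} [Fintype ι] [Nonempty ι]
    [SeminormedAddGroup G] (v : ι → G) : ∃ i, ‖v i‖ = ‖v‖ := by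
  obtain ⟨i, -, hi⟩ := Finset.exists_mem_eq_sup Finset.univ Finset.univ_nonempty fun i => ‖v i‖₊
  exact ⟨i, congrArg NNReal.toReal (hi.symm.trans (Pi.nnnorm_def v).symm)⟩

lemma exists_ne_zero_norm_eq_norm {K ι : Type*} [NormedField K] [Fintype ι] {v : ι → K}
    (hv : v ≠ 0) : ∃ a : K, a ≠ 0 ∧ ‖a‖ = ‖v‖ := by
  obtain ⟨i, -⟩ := Function.ne_iff.mp hv
  have : Nonempty ι := ⟨i⟩
  obtain ⟨j, hj⟩ := Pi.exists_norm_apply_eq_norm v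
  exact ⟨v j, norm_ne_zero_iff.mp (hj ▸ norm_ne_zero_iff.mpr hv), hj⟩

lemma measure_closedBall_norm {K : Type*} [NormedField K] [MeasurableSpace K] {μ : Measure K}
    [μ.IsAddLeftInvariant] (hμ1 : μ (closedBall (0 : K) 1) = 1)
    (hμs : ∀ (a : K) (A : Set K), μ (a • A) = (‖a‖₊ : ENNReal) * μ A) (a : K) {c : K}
    (hc : c ≠ 0) : μ (closedBall a ‖c‖) = ‖c‖₊ := by
  have : closedBall a ‖c‖ = a +ᵥ c • closedBall (0 : K) 1 := by
    rw [smul_closedBall' hc, smul_zero, mul_one, vadd_closedBall, vadd_eq_add, add_zero]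
  rw [this, measure_vadd, hμs, hμ1, mul_one]

lemma pi_measure_closedBall_norm {K : Type*} [NormedField K] [MeasurableSpace K]
    {μ : Measure K} [μ.IsAddLeftInvariant] [SigmaFinite μ] (hμ1 : μ (closedBall (0 : K) 1) = 1)
    (hμs : ∀ (a : K) (A : Set K), μ (a • A) = (‖a‖₊ : ENNReal) * μ A) {ι : Type*} [Fintype ι]
    (z : ι → K) {c : K} (hc : c ≠ 0) :
    Measure.pi (fun _ : ι => μ) (closedBall z ‖c‖) = ENNReal.ofReal (‖c‖ ^ Fintype.card ι) := by
  rw [closedBall_pi z (norm_nonneg c), Measure.pi_pi]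
  simp only [measure_closedBall_norm hμ1 hμs _ hc, Finset.prod_const, Finset.card_univ]
  rw [ENNReal.ofReal_pow (norm_nonneg _), ofReal_norm, enorm_eq_nnnorm]

lemma densityZeroAt.eventually_not_closedBall_subset {K : Type*} [NontriviallyNormedField K]
    [MeasurableSpace K] {μ : Measure K} [μ.IsAddLeftInvariant] [SigmaFinite μ]
    (hμ1 : μ (closedBall (0 : K) 1) = 1)
    (hμs : ∀ (a : K) (A : Set K), μ (a • A) = (‖a‖₊ : ENNReal) * μ A) {m : ℕ}
    {T : Set (Fin m → K)} {y : Fin m → K}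
    (hT : densityZeroAt K (Measure.pi fun _ : Fin m => μ) m T y) {c : K} (hc : c ≠ 0) :
    ∀ᶠ x in 𝓝[≠] y, ¬ closedBall x (‖c‖ * ‖x - y‖) ⊆ T := by
  obtain ⟨c', hc'⟩ := NormedField.exists_lt_norm K (1 + ‖c‖)
  have hc'0 : c' ≠ 0 := norm_pos_iff.mp (by linarith [norm_nonneg c])
  set κ := ENNReal.ofReal ((‖c‖ / ‖c'‖) ^ m)
  have hκ : 0 < κ := ENNReal.ofReal_pos.mpr (by positivity)
  have hρ : Tendsto (fun x => ‖c'‖ * ‖x - y‖) (𝓝[≠] y)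
      (𝓝[{R : ℝ | ∃ a : K, a ≠ 0 ∧ ‖a‖ = R}] 0) := by
    refine tendsto_nhdsWithin_iff.mpr ⟨?_, ?_⟩
    · simpa using ((tendsto_norm_sub_self y).const_mul ‖c'‖).mono_left nhdsWithin_le_nhds
    · filter_upwards [self_mem_nhdsWithin] with x hx
      obtain ⟨a, ha, hax⟩ := exists_ne_zero_norm_eq_norm (sub_ne_zero.mpr hx)
      exact ⟨c' * a, mul_ne_zero hc'0 ha, by rw [norm_mul, hax]⟩
  filter_upwards [hρ.eventually (hT.eventually (gt_mem_nhds hκ)), self_mem_nhdsWithin]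
    with x hsmall hxy hsub
  obtain ⟨a, ha, hax⟩ := exists_ne_zero_norm_eq_norm (sub_ne_zero.mpr hxy)
  have hball : closedBall x (‖c‖ * ‖x - y‖) ⊆ T ∩ closedBall y (‖c'‖ * ‖x - y‖) := by
    refine subset_inter hsub (closedBall_subset_closedBall' ?_)
    rw [dist_eq_norm]
    nlinarith [norm_nonneg (x - y)]
  have hmeasure : Measure.pi (fun _ : Fin m => μ) (closedBall x (‖c‖ * ‖x - y‖))
      = κ * ENNReal.ofReal ((‖c'‖ * ‖x - y‖) ^ m) := by
    rw [← hax, ← norm_mul, pi_measure_closedBall_norm hμ1 hμs x (mul_ne_zero hc ha),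
      Fintype.card_fin, ← ENNReal.ofReal_mul (by positivity), norm_mul]
    congr 1
    rw [← mul_pow]
    field_simp
  have hr : 0 < ‖x - y‖ := norm_pos_iff.mpr (sub_ne_zero.mpr hxy)
  have hρ0 : ENNReal.ofReal ((‖c'‖ * ‖x - y‖) ^ m) ≠ 0 :=
    (ENNReal.ofReal_pos.mpr (by positivity)).ne'
  refine hsmall.not_ge ((ENNReal.le_div_iff_mul_le (.inl hρ0) (.inl ENNReal.ofReal_ne_top)).mpr ?_)
  exact hmeasure ▸ measure_mono hball

lemma norm_sub_sub_map_sub_le_of_lipschitz {𝕜 E F : Type*} [NontriviallyNormedField 𝕜]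
    [SeminormedAddCommGroup E] [NormedSpace 𝕜 E] [SeminormedAddCommGroup F] [NormedSpace 𝕜 F]
    (L : E →L[𝕜] F) {f : E → F} {x y z : E} {C η : ℝ} (hxz : ‖f x - f z‖ ≤ C * ‖x - z‖)
    (hz : ‖f z - f y - L (z - y)‖ ≤ η * ‖z - y‖) :
    ‖f x - f y - L (x - y)‖ ≤ (C + ‖L‖) * ‖x - z‖ + η * ‖z - y‖ := by
  have hsplit : f x - f y - L (x - y) = (f x - f z) + L (z - x) + (f z - f y - L (z - y)) := by
    simp only [map_sub]
    abel
  calc ‖f x - f y - L (x - y)‖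
      ≤ ‖f x - f z‖ + ‖L (z - x)‖ + ‖f z - f y - L (z - y)‖ := hsplit ▸ norm_add₃_le
    _ ≤ C * ‖x - z‖ + ‖L‖ * ‖x - z‖ + η * ‖z - y‖ := by
      gcongr
      rw [norm_sub_rev x z]
      exact L.le_opNorm _
    _ = (C + ‖L‖) * ‖x - z‖ + η * ‖z - y‖ := by ring

lemma eventually_norm_sub_sub_map_sub_le {K : Type*} [NontriviallyNormedField K]
    [MeasurableSpace K] {μ : Measure K} [μ.IsAddLeftInvariant] [SigmaFinite μ]
    (hμ1 : μ (closedBall (0 : K) 1) = 1)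
    (hμs : ∀ (a : K) (A : Set K), μ (a • A) = (‖a‖₊ : ENNReal) * μ A) {m n : ℕ}
    {S : Set (Fin m → K)} {f : (Fin m → K) → (Fin n → K)} {L : (Fin m → K) →L[K] (Fin n → K)}
    {y : Fin m → K} {R C η : ℝ} (hR : 0 < R) (hC : 0 ≤ C) (hη : 0 ≤ η)
    (hlip : ∀ z ∈ S, ∀ x ∈ closedBall z R, ‖f x - f z‖ ≤ C * ‖x - z‖)
    (hS : densityZeroAt K (Measure.pi fun _ : Fin m => μ) m Sᶜ y)
    (hap : densityZeroAt K (Measure.pi fun _ : Fin m => μ) m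
      {z | η * ‖z - y‖ < ‖f z - f y - L (z - y)‖} y)
    {c : K} (hc0 : c ≠ 0) (hc1 : ‖c‖ ≤ 1) :
    ∀ᶠ x in 𝓝[≠] y, ‖f x - f y - L (x - y)‖ ≤ ((C + ‖L‖) * ‖c‖ + 2 * η) * ‖x - y‖ := by
  filter_upwards [(hS.union hap).eventually_not_closedBall_subset hμ1 hμs hc0,
    eventually_nhdsWithin_of_eventually_nhds (ball_mem_nhds y hR)] with x hx hxR
  obtain ⟨z, hzx, hzT⟩ := not_subset.mp hx
  simp only [mem_union, mem_compl_iff, mem_ofPred_eq, not_or, not_not, not_lt] at hzT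
  obtain ⟨hzS, hzy⟩ := hzT
  rw [mem_closedBall, dist_eq_norm] at hzx
  rw [dist_eq_norm] at hxR
  have hθ : ‖c‖ * ‖x - y‖ ≤ ‖x - y‖ := mul_le_of_le_one_left (norm_nonneg _) hc1
  have hxz : ‖f x - f z‖ ≤ C * ‖x - z‖ :=
    hlip z hzS x (by rw [mem_closedBall, dist_eq_norm, norm_sub_rev]; linarith)
  have hzy2 : ‖z - y‖ ≤ 2 * ‖x - y‖ := by
    linarith [norm_sub_le_norm_sub_add_norm_sub z x y]
  calc ‖f x - f y - L (x - y)‖ ≤ (C + ‖L‖) * ‖x - z‖ + η * ‖z - y‖ :=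
        norm_sub_sub_map_sub_le_of_lipschitz L hxz hzy
    _ ≤ (C + ‖L‖) * (‖c‖ * ‖x - y‖) + η * (2 * ‖x - y‖) := by
        rw [norm_sub_rev]
        gcongr
    _ = ((C + ‖L‖) * ‖c‖ + 2 * η) * ‖x - y‖ := by ring

theorem stmt9_general {K : Type*} [NontriviallyNormedField K]
    [LocallyCompactSpace K] [MeasurableSpace K]
    (μ : Measure K) [μ.IsAddHaarMeasure]
    (hμ1 : μ (closedBall (0 : K) 1) = 1)
    (hμs : ∀ (a : K) (A : Set K), μ (a • A) = (‖a‖₊ : ENNReal) * μ A)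
    {m n : ℕ}
    (S A : Set (Fin m → K))
    (f : (Fin m → K) → (Fin n → K))
    (R C : ℝ) (hR : 0 < R) (hC : 0 < C)
    (hball : ∀ z ∈ S, closedBall z R ⊆ A ∧
      ∀ x ∈ closedBall z R, ‖f x - f z‖ ≤ C * ‖x - z‖)
    (y : Fin m → K)
    (Uy : Set (Fin m → K)) (hUy : Uy ∈ 𝓝 y)
    (hdens : ∀ z ∈ Uy, densityZeroAt K (Measure.pi fun _ : Fin m => μ) m Sᶜ z)
    (L : (Fin m → K) →ₗ[K] (Fin n → K))
    (hap : ∀ ε : ℝ, 0 < ε →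
      densityZeroAt K (Measure.pi fun _ : Fin m => μ) m
        {z : Fin m → K | ε * ‖z - y‖ < ‖f z - f y - L (z - y)‖} y) :
    Filter.Tendsto (fun x : Fin m → K => ‖f x - f y - L (x - y)‖ / ‖x - y‖)
      (𝓝[A \ {y}] y) (𝓝 0) := by
  refine tendsto_nhdsWithin_mono_left (sdiff_subset_compl A {y}) ?_
  have : ProperSpace K := .of_locallyCompactSpace K
  set L' := LinearMap.toContinuousLinearMap L
  simp only [← LinearMap.coe_toContinuousLinearMap' L] at hap ⊢
  rw [Metric.tendsto_nhds]
  intro ε hε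
  have hCL : 0 < C + ‖L'‖ := by positivity
  obtain ⟨c, hc0, hc⟩ := NormedField.exists_norm_lt K
    (lt_min one_pos (div_pos hε (mul_pos two_pos hCL)))
  have hCLc : (C + ‖L'‖) * ‖c‖ < ε / 2 := by
    have := (lt_div_iff₀ (mul_pos two_pos hCL)).mp (hc.trans_le (min_le_right _ _))
    linarith
  filter_upwards [eventually_norm_sub_sub_map_sub_le hμ1 hμs hR hC.le (by positivity)
    (fun z hz => (hball z hz).2) (hdens y (mem_of_mem_nhds hUy)) (hap (ε / 4) (by positivity))
    (norm_pos_iff.mp hc0) (hc.le.trans (min_le_left _ _)), self_mem_nhdsWithin] with x hx hxy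
  have hr : 0 < ‖x - y‖ := norm_pos_iff.mpr (sub_ne_zero.mpr hxy)
  rw [Real.dist_eq, sub_zero, abs_of_nonneg (by positivity), div_lt_iff₀ hr]
  calc ‖f x - f y - L' (x - y)‖ ≤ ((C + ‖L'‖) * ‖c‖ + 2 * (ε / 4)) * ‖x - y‖ := hx
    _ < ε * ‖x - y‖ := by gcongr; linarith

/-- Lemma 16. Let `S ⊆ A ⊆ K^m`, `f : A → K^n`,
`0 < R < ∞`, `0 < C < ∞` be such that for every `z ∈ S` one has
`B(z,R) ⊆ A` and `‖f x - f z‖ ≤ C ‖x - z‖` for all `x ∈ B(z,R)`.  If `y ∈ S`,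
the complement of `S` has `μ^m` density `0` at every point of a neighborhood
`U_y` of `y`, and `f` is approximately differentiable at `y` with approximate
derivative `L`, then `f` is differentiable at `y` with derivative `L`:
`‖f x - f y - L (x - y)‖ / ‖x - y‖ → 0` as `x → y` within `A`. -/
theorem stmt9 {K : Type*} [NontriviallyNormedField K] [IsUltrametricDist K]
    [LocallyCompactSpace K] [MeasurableSpace K] [BorelSpace K]
    (μ : Measure K) [μ.IsAddHaarMeasure]
    (hμ1 : μ (closedBall (0 : K) 1) = 1)
    (hμs : ∀ (a : K) (A : Set K), μ (a • A) = (‖a‖₊ : ENNReal) * μ A)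
    {m n : ℕ}
    (S A : Set (Fin m → K)) (hSA : S ⊆ A)
    (f : (Fin m → K) → (Fin n → K))
    (R C : ℝ) (hR : 0 < R) (hC : 0 < C)
    (hball : ∀ z ∈ S, closedBall z R ⊆ A ∧
      ∀ x ∈ closedBall z R, ‖f x - f z‖ ≤ C * ‖x - z‖)
    (y : Fin m → K) (hy : y ∈ S)
    (Uy : Set (Fin m → K)) (hUy : Uy ∈ 𝓝 y)
    (hdens : ∀ z ∈ Uy, densityZeroAt K (Measure.pi fun _ : Fin m => μ) m Sᶜ z)
    (L : (Fin m → K) →ₗ[K] (Fin n → K))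
    (hap : ∀ ε : ℝ, 0 < ε →
      densityZeroAt K (Measure.pi fun _ : Fin m => μ) m
        {z : Fin m → K | ε * ‖z - y‖ < ‖f z - f y - L (z - y)‖} y) :
    Filter.Tendsto (fun x : Fin m → K => ‖f x - f y - L (x - y)‖ / ‖x - y‖)
      (𝓝[A \ {y}] y) (𝓝 0) :=
  stmt9_general μ hμ1 hμs S A f R C hR hC hball y Uy hUy hdens L hap
end
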